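/- arXiv:1312.5910 — 3 statements merged into one kernel-verified Lean document; each statement's English description precedes it below -/
import Mathlib

section
/- Let G be an action operad. Then the group G(1) is abelian. -/
/-- Cast an element of a dependent family along an equality of indices. -/
def castF (F : ℕ → Type) {a b : ℕ} (h : a = b) (x : F a) : F b := h ▸ x

/-- Splitting off the first summand of a sigma type over `Fin (n+1)`. -/
def sigmaFinSucc {n : ℕ} (β : Fin (n + 1) → Type) :
    (Σ i : Fin (n + 1), β i) ≃ (β 0 ⊕ Σ i : Fin n, β i.succ) where
  toFun x := Fin.cases (motive := fun j => β j → β 0 ⊕ Σ i : Fin n, β i.succ)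
    Sum.inl (fun i b => Sum.inr ⟨i, b⟩) x.1 x.2
  invFun s := Sum.elim (fun b => ⟨0, b⟩) (fun p => ⟨p.1.succ, p.2⟩) s
  left_inv x := by
    obtain ⟨i, b⟩ := x
    induction i using Fin.cases with
    | zero => rfl
    | succ i => rfl
  right_inv s := by rcases s with b | ⟨i, b⟩ <;> rfl

/-- The lexicographic identification of a disjoint union of blocks
`Fin (k 0), …, Fin (k (n-1))` (in this order) with `Fin (k 0 + ⋯ + k (n-1))`. -/
def finSigmaEquiv : ∀ {n : ℕ} (k : Fin n → ℕ), (Σ i : Fin n, Fin (k i)) ≃ Fin (∑ i, k i)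
  | 0, k => by
      haveI : IsEmpty (Fin (∑ i : Fin 0, k i)) := by
        rw [Finset.univ_eq_empty, Finset.sum_empty]; infer_instance
      exact Equiv.equivOfIsEmpty _ _
  | n + 1, k =>
      (sigmaFinSucc fun i => Fin (k i)).trans <|
        ((Equiv.sumCongr (Equiv.refl (Fin (k 0))) (finSigmaEquiv fun i => k i.succ)).trans
          (finSumFinEquiv.trans (finCongr (Fin.sum_univ_succ k).symm)))

/-- Operadic composition in the symmetric operad:
`μ(σ; τ₁, …, τₙ) = σ⁺ · (τ₁ ⊕ ⋯ ⊕ τₙ)`. -/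
def permOperadComp {n : ℕ} (k : Fin n → ℕ) (σ : Equiv.Perm (Fin n))
    (τ : ∀ i, Equiv.Perm (Fin (k i))) : Equiv.Perm (Fin (∑ i, k i)) :=
  (finSigmaEquiv k).symm.trans <|
    ((Equiv.sigmaCongr (β₂ := fun j => Fin (k (σ.symm j))) σ
        fun i => (τ i).trans (finCongr (congrArg k (σ.symm_apply_apply i).symm))).trans
      ((finSigmaEquiv fun j => k (σ.symm j)).trans (finCongr (Equiv.sum_comp σ.symm k))))

lemma sum_sigma_eq {n : ℕ} (k : Fin n → ℕ) (m : ∀ i, Fin (k i) → ℕ) :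
    (∑ s : Fin (∑ i, k i), m ((finSigmaEquiv k).symm s).1 ((finSigmaEquiv k).symm s).2)
      = ∑ i, ∑ j, m i j := by
  have h := Equiv.sum_comp (finSigmaEquiv k)
    (fun s => m ((finSigmaEquiv k).symm s).1 ((finSigmaEquiv k).symm s).2)
  rw [← h]
  have h2 : ∀ p : (i : Fin n) × Fin (k i),
      m ((finSigmaEquiv k).symm ((finSigmaEquiv k) p)).fst
          ((finSigmaEquiv k).symm ((finSigmaEquiv k) p)).snd = m p.1 p.2 := by
    intro p; rw [Equiv.symm_apply_apply]
  rw [Finset.sum_congr rfl fun p _ => h2 p, ← Finset.univ_sigma_univ, Finset.sum_sigma]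
/-- An action operad: an operad in sets whose levels are groups, with a map to the
symmetric operad that is levelwise a group homomorphism and an operad map, and
satisfying the exchange law relating group multiplication and operadic composition. -/
structure ActionOperad (G : ℕ → Type) [∀ n, Group (G n)] where
  /-- the operadic unit `id ∈ G(1)` -/
  unit : G 1
  /-- operadic composition `μ : G(n) × G(k₁) × ⋯ × G(kₙ) → G(k₁+⋯+kₙ)` -/
  comp : ∀ {n : ℕ} {k : Fin n → ℕ}, G n → (∀ i, G (k i)) → G (∑ i, k i)
  /-- the underlying-permutation group homomorphisms `πₙ : G(n) → Σₙ` -/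
  π : ∀ n : ℕ, G n →* Equiv.Perm (Fin n)
  /-- `μ(id; x) = x` -/
  unit_comp : ∀ {n : ℕ} (x : G n),
    castF G (Fin.sum_univ_one fun _ => n) (comp unit fun _ : Fin 1 => x) = x
  /-- `μ(x; id, …, id) = x` -/
  comp_unit : ∀ {n : ℕ} (x : G n),
    castF G (by simp : (∑ _i : Fin n, 1) = n) (comp x fun _ : Fin n => unit) = x
  /-- associativity of operadic composition -/
  comp_assoc : ∀ {n : ℕ} {k : Fin n → ℕ} {m : ∀ i, Fin (k i) → ℕ}
      (x : G n) (y : ∀ i, G (k i)) (z : ∀ i j, G (m i j)),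
      castF G (sum_sigma_eq k m)
        (comp (comp x y) fun s => z ((finSigmaEquiv k).symm s).1 ((finSigmaEquiv k).symm s).2)
        = comp x fun i => comp (y i) (z i)
  /-- `π` preserves the operadic unit -/
  π_unit : π 1 unit = 1
  /-- `π` is a map of operads -/
  π_comp : ∀ {n : ℕ} {k : Fin n → ℕ} (g : G n) (f : ∀ i, G (k i)),
      π _ (comp g f) = permOperadComp k (π n g) fun i => π _ (f i)
  /-- the exchange law
  `μ(g; f₁,…,fₙ)·μ(g′; f₁′,…,fₙ′) = μ(g·g′; f_{π(g′)(1)}·f₁′, …, f_{π(g′)(n)}·fₙ′)` -/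
  exchange : ∀ {n : ℕ} {k : Fin n → ℕ} (g g' : G n)
      (f : ∀ i, G (k ((π n g').symm i))) (f' : ∀ i, G (k i)),
      castF G (Equiv.sum_comp (π n g').symm k) (comp g f) * comp g' f'
        = comp (g * g') fun i =>
            castF G (congrArg k ((π n g').symm_apply_apply i)) (f (π n g' i)) * f' i

lemma castF_mul {G : ℕ → Type} [∀ n, Mul (G n)] {a b : ℕ} (h : a = b) (x y : G a) :
    castF G h (x * y) = castF G h x * castF G h y := by
  subst h; rfl

namespace ActionOperad

variable {G : ℕ → Type} [∀ n, Group (G n)] (A : ActionOperad G)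

def comp₁ (a b : G 1) : G 1 :=
  castF G (Fin.sum_univ_one fun _ => 1) (A.comp (k := fun _ => 1) a fun _ => b)

theorem isUnital_comp₁ : EckmannHilton.IsUnital A.comp₁ A.unit :=
  { left_id := A.unit_comp, right_id := A.comp_unit }

/-- In arity one the reindexing by `π₁` and the casts in the exchange law are trivial
definitionally. -/
theorem comp₁_mul_comp₁ (a a' b b' : G 1) :
    A.comp₁ (a * a') (b * b') = A.comp₁ a b * A.comp₁ a' b' := by
  rw [comp₁, comp₁, comp₁, ← castF_mul]
  exact congrArg _ (A.exchange (k := fun _ => 1) a a' (fun _ => b) fun _ => b').symm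

end ActionOperad

/-- For an action operad `G`, the group `G(1)` is abelian. -/
theorem actionOperad_G1_comm (G : ℕ → Type) [∀ n, Group (G n)]
    (A : ActionOperad G) (g h : G 1) : g * h = h * g :=
  (EckmannHilton.mul_comm A.isUnital_comp₁ EckmannHilton.MulOneClass.isUnital
    A.comp₁_mul_comp₁).comm g h
end

section
/- Let G be an action operad and P a G-operad in sets, with associated endofunctor P̲ of the category of sets. If P̲ preserves pullbacks, then for every n, every p ∈ P(n) and every g ∈ G(n), the equation p·g = p implies that πₙ(g) is the identity permutation (i.e. g ∈ ker πₙ). -/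
/-- A `G`-operad for an action operad `G`: an operad `P` in sets together with a
right `G(n)`-action on each `P(n)` satisfying the two equivariance axioms. -/
structure GOperad (G : ℕ → Type) [∀ n, Group (G n)] (A : ActionOperad G) where
  /-- the underlying family of sets -/
  P : ℕ → Type
  /-- the operadic unit `id ∈ P(1)` -/
  unit : P 1
  /-- operadic composition -/
  comp : ∀ {n : ℕ} {k : Fin n → ℕ}, P n → (∀ i, P (k i)) → P (∑ i, k i)
  /-- the right `G(n)`-action on `P(n)` -/
  act : ∀ {n : ℕ}, P n → G n → P n
  act_one : ∀ {n : ℕ} (x : P n), act x 1 = x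
  act_mul : ∀ {n : ℕ} (x : P n) (g h : G n), act x (g * h) = act (act x g) h
  unit_comp : ∀ {n : ℕ} (x : P n),
    castF P (Fin.sum_univ_one fun _ => n) (comp unit fun _ : Fin 1 => x) = x
  comp_unit : ∀ {n : ℕ} (x : P n),
    castF P (by simp : (∑ _i : Fin n, 1) = n) (comp x fun _ : Fin n => unit) = x
  comp_assoc : ∀ {n : ℕ} {k : Fin n → ℕ} {m : ∀ i, Fin (k i) → ℕ}
      (x : P n) (y : ∀ i, P (k i)) (z : ∀ i j, P (m i j)),
      castF P (sum_sigma_eq k m)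
        (comp (comp x y) fun s => z ((finSigmaEquiv k).symm s).1 ((finSigmaEquiv k).symm s).2)
        = comp x fun i => comp (y i) (z i)
  /-- `μ(x; y₁·g₁, …, yₙ·gₙ) = μ(x; y₁, …, yₙ)·μ(e; g₁, …, gₙ)` -/
  equiv_inner : ∀ {n : ℕ} {k : Fin n → ℕ} (x : P n) (y : ∀ i, P (k i))
      (g : ∀ i, G (k i)),
      comp x (fun i => act (y i) (g i)) = act (comp x y) (A.comp (1 : G n) g)
  /-- `μ(x·g; y₁, …, yₙ) = μ(x; y_{π(g)⁻¹(1)}, …, y_{π(g)⁻¹(n)})·μ(g; e, …, e)` -/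
  equiv_outer : ∀ {n : ℕ} {k : Fin n → ℕ} (x : P n) (g : G n) (y : ∀ i, P (k i)),
      comp (act x g) y
        = castF P (Equiv.sum_comp (A.π n g).symm k)
            (act (comp x fun i => y ((A.π n g).symm i))
              (A.comp g fun i => (1 : G (k ((A.π n g).symm i)))))

open CategoryTheory

variable {G : ℕ → Type} [∀ n, Group (G n)] {A : ActionOperad G}

/-- The relation `(p·g; x₁,…,xₙ) ∼ (p; x_{π(g)⁻¹(1)},…,x_{π(g)⁻¹(n)})` defining the
quotient `P(n) ×_{G(n)} Xⁿ`. -/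
def PRel (P : GOperad G A) (n : ℕ) (X : Type) :
    P.P n × (Fin n → X) → P.P n × (Fin n → X) → Prop :=
  fun a b => ∃ g : G n, a.1 = P.act b.1 g ∧ ∀ i, b.2 i = a.2 ((A.π n g).symm i)

/-- The value `P̲(X) = ∐ₙ P(n) ×_{G(n)} Xⁿ` of the endofunctor associated to a
`G`-operad `P`. -/
def PApply (P : GOperad G A) (X : Type) : Type :=
  Σ n : ℕ, Quot (PRel P n X)

/-- The endofunctor `P̲` of the category of sets associated to a `G`-operad `P`. -/
def PEndofunctor (P : GOperad G A) : Type ⥤ Type where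
  obj X := PApply P X
  map {X Y} f := TypeCat.ofHom fun z =>
    ⟨z.1, Quot.lift (fun a => Quot.mk _ (a.1, fun i => f (a.2 i)))
      (by
        rintro a b ⟨g, h1, h2⟩
        exact Quot.sound ⟨g, h1, fun i => by show f (b.2 i) = f (a.2 _); rw [h2 i]⟩) z.2⟩
  map_id X := by
    ext z
    obtain ⟨n, q⟩ := z
    induction q using Quot.ind with
    | _ a => rfl
  map_comp {X Y Z} f g := by
    ext z
    obtain ⟨n, q⟩ := z
    induction q using Quot.ind with
    | _ a => rfl

universe u

open Limits

/-- `X × Y` is the pullback of `X ⟶ PUnit ⟵ Y`. -/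
lemma Types.map_prod_ext_of_preservesPullbacks (F : Type u ⥤ Type u)
    [PreservesLimitsOfShape WalkingCospan F] {X Y : Type u} {a b : F.obj (X × Y)}
    (hfst : F.map (TypeCat.ofHom Prod.fst) a = F.map (TypeCat.ofHom Prod.fst) b)
    (hsnd : F.map (TypeCat.ofHom Prod.snd) a = F.map (TypeCat.ofHom Prod.snd) b) : a = b :=
  Types.ext_of_isPullback
    ((IsPullback.of_is_product (Types.binaryProductLimit X Y) Types.isTerminalPUnit).map F)
    hfst hsnd

lemma PRel_equivalence (P : GOperad G A) (n : ℕ) (X : Type) : Equivalence (PRel P n X) where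
  refl a := ⟨1, (P.act_one a.1).symm, fun _ => by rw [map_one]; rfl⟩
  symm := by
    rintro a b ⟨h, h₁, h₂⟩
    refine ⟨h⁻¹, by rw [h₁, ← P.act_mul, mul_inv_cancel, P.act_one], fun i => ?_⟩
    simp [h₂, Equiv.Perm.inv_def]
  trans := by
    rintro a b c ⟨h, h₁, h₂⟩ ⟨h', h₁', h₂'⟩
    exact ⟨h' * h, by rw [h₁, h₁', ← P.act_mul], fun i => by rw [h₂', h₂, map_mul]; rfl⟩

lemma PApply.mk_eq_mk_iff (P : GOperad G A) {X : Type} {n : ℕ} (a b : P.P n × (Fin n → X)) :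
    (⟨n, Quot.mk _ a⟩ : PApply P X) = ⟨n, Quot.mk _ b⟩ ↔ PRel P n X a b := by
  refine ⟨fun h => ?_, fun h => by rw [Quot.sound h]⟩
  have hq : Quot.mk (PRel P n X) a = Quot.mk _ b := eq_of_heq (Sigma.mk.inj_iff.mp h).2
  exact (PRel_equivalence P n X).eqvGen_iff.mp (Quot.eqvGen_exact hq)

lemma PApply.mk_comp_perm_of_act_eq (P : GOperad G A) {X : Type} {n : ℕ} {p : P.P n}
    {g : G n} (hp : P.act p g = p) (x : Fin n → X) :
    (⟨n, Quot.mk _ (p, x ∘ A.π n g)⟩ : PApply P X) = ⟨n, Quot.mk _ (p, x)⟩ :=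
  (PApply.mk_eq_mk_iff P _ _).mpr ⟨g, hp.symm, fun i => by simp⟩

/-- If the endofunctor `P̲` associated to a `G`-operad `P`
preserves pullbacks, then whenever `p·g = p` in `P(n)` the underlying permutation
`πₙ(g)` is the identity, i.e. `g ∈ ker πₙ`. -/
theorem pEndofunctor_preservesPullbacks_to_free (G : ℕ → Type) [∀ n, Group (G n)]
    (A : ActionOperad G) (P : GOperad G A)
    (hpb : Nonempty (Limits.PreservesLimitsOfShape Limits.WalkingCospan
      (PEndofunctor P))) :
    ∀ (n : ℕ) (p : P.P n) (g : G n), P.act p g = p → A.π n g = 1 := by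
  obtain ⟨_⟩ := hpb
  intro n p g hp
  -- `[p; (i, i)]` and `[p; (i, π g i)]` have the same projections, so they agree in `P̲(Fin n × Fin n)`;
  -- a witness `h` of this equality fixes the diagonal, hence `π h = 1` and then `π g = 1`.
  have hdiag : (⟨n, Quot.mk _ (p, fun i => (i, i))⟩ : PApply P (Fin n × Fin n))
      = ⟨n, Quot.mk _ (p, fun i => (i, A.π n g i))⟩ :=
    Types.map_prod_ext_of_preservesPullbacks (PEndofunctor P) rfl
      (PApply.mk_comp_perm_of_act_eq P hp id).symm
  obtain ⟨h, -, hh⟩ := (PApply.mk_eq_mk_iff P _ _).mp hdiag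
  ext i
  obtain ⟨hfix, hg⟩ := Prod.mk.inj (hh i)
  rw [hg, ← hfix]
  rfl
end

section
/- For all positive integers l, m and n₁,…,n_m, putting N = n₁ + ⋯ + n_m, the following identity holds in the symmetric group Σ_{Nl}: μ(τ_{m,l}; e_{n₁},…,e_{n₁},…,e_{n_m},…,e_{n_m}) · μ(e_m; τ_{n₁,l},…,τ_{n_m,l}) = τ_{N,l}, where in the first factor each identity permutation e_{nᵢ} is repeated l times (in the order e_{n₁} l times, then e_{n₂} l times, and so on), e_k denotes the identity of Σ_k, and μ denotes operadic composition in the symmetric operad. -/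
lemma mul_add_lt_mul {p m q n : ℕ} (hp : p < m) (hq : q < n) : p * n + q < m * n :=
  calc p * n + q < p * n + n := by omega
    _ = (p + 1) * n := by ring
    _ ≤ m * n := Nat.mul_le_mul_right n hp

/-- Transport of a permutation along an equality of natural numbers. -/
def permCast {a b : ℕ} (h : a = b) (σ : Equiv.Perm (Fin a)) : Equiv.Perm (Fin b) :=
  ((finCongr h).symm.trans σ).trans (finCongr h)

/-- `t` is the transpose permutation `τ_{m,n} ∈ Σ_{mn}` determined (in 1-indexed
notation) by `τ_{m,n}((p−1)n + q) = (q−1)m + p` for `1 ≤ p ≤ m`, `1 ≤ q ≤ n`. -/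
def IsTransposePerm (m n : ℕ) (t : Equiv.Perm (Fin (m * n))) : Prop :=
  ∀ (p : Fin m) (q : Fin n),
    t ⟨p.val * n + q.val, mul_add_lt_mul p.isLt q.isLt⟩
      = ⟨q.val * m + p.val, Nat.mul_comm n m ▸ mul_add_lt_mul q.isLt p.isLt⟩

lemma sum_div_eq (m l : ℕ) (hl : 0 < l) (nn : Fin m → ℕ) :
    ∑ s : Fin (m * l), nn ⟨s.val / l, (Nat.div_lt_iff_lt_mul hl).mpr s.isLt⟩
      = (∑ i, nn i) * l := by
  have h := Equiv.sum_comp (finProdFinEquiv (m := m) (n := l))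
    (fun s : Fin (m * l) => nn ⟨s.val / l, (Nat.div_lt_iff_lt_mul hl).mpr s.isLt⟩)
  rw [← h]
  have h2 : ∀ p : Fin m × Fin l,
      nn ⟨((finProdFinEquiv p : Fin (m * l)) : ℕ) / l,
        (Nat.div_lt_iff_lt_mul hl).mpr (finProdFinEquiv p).isLt⟩ = nn p.1 := by
    intro p
    congr 1
    ext
    show (p.2.val + l * p.1.val) / l = p.1.val
    rw [Nat.add_mul_div_left _ _ hl, Nat.div_eq_of_lt p.2.isLt, Nat.zero_add]
  calc ∑ p : Fin m × Fin l, _ = ∑ p : Fin m × Fin l, nn p.1 :=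
        Finset.sum_congr rfl fun p _ => h2 p
    _ = (∑ i, nn i) * l := by
        rw [Fintype.sum_prod_type]
        simp only [Finset.sum_const, Finset.card_univ, Fintype.card_fin, smul_eq_mul]
        rw [← Finset.mul_sum, mul_comm]

def blockOffset {n : ℕ} (k : Fin n → ℕ) (c : ℕ) : ℕ :=
  ∑ t : Fin n, if (t : ℕ) < c then k t else 0


lemma blockOffset_zero {n : ℕ} (k : Fin n → ℕ) : blockOffset k 0 = 0 := by
  simp [blockOffset]

lemma blockOffset_succ {n : ℕ} (k : Fin (n + 1) → ℕ) (c : ℕ) :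
    blockOffset k (c + 1) = k 0 + blockOffset (fun t => k t.succ) c := by
  simp [blockOffset, Fin.sum_univ_succ]

lemma blockOffset_mul {n : ℕ} (k : Fin n → ℕ) (l c : ℕ) :
    blockOffset (fun t => k t * l) c = blockOffset k c * l := by
  simp [blockOffset, Finset.sum_mul, ite_mul]

lemma blockOffset_const {l : ℕ} (a c : ℕ) (hc : c ≤ l) :
    blockOffset (fun _ : Fin l => a) c = c * a := by
  rw [blockOffset, Finset.sum_ite, Finset.sum_const_zero, add_zero, Finset.sum_const,
    smul_eq_mul, Fin.card_filter_val_lt, min_eq_right hc]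

lemma blockOffset_comp_finCongr {n n' : ℕ} (h : n = n') (k : Fin n' → ℕ) (c : ℕ) :
    blockOffset (fun s => k (finCongr h s)) c = blockOffset k c := by
  subst h; rfl

lemma lex_lt_iff {l a b i q : ℕ} (hb : b < l) (hq : q ≤ l) :
    b + l * a < i * l + q ↔ a < i ∨ a = i ∧ b < q := by
  rw [mul_comm i l]
  rcases lt_trichotomy a i with h | rfl | h
  · have : l * (a + 1) ≤ l * i := Nat.mul_le_mul_left l h
    simp only [h, true_or, iff_true]
    lia
  · simp only [lt_irrefl, false_or, true_and]
    lia
  · have : l * (i + 1) ≤ l * a := Nat.mul_le_mul_left l h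
    simp only [h.not_gt, h.ne', false_or, false_and, iff_false]
    lia

lemma blockOffset_finProd {m l : ℕ} (g : Fin m → Fin l → ℕ) (i : Fin m) (q : ℕ) (hq : q ≤ l) :
    blockOffset (fun s => g (finProdFinEquiv.symm s).1 (finProdFinEquiv.symm s).2) (i * l + q)
      = blockOffset (fun a => ∑ b, g a b) i + blockOffset (g i) q := by
  simp only [blockOffset]
  rw [← finProdFinEquiv.sum_comp, Fintype.sum_prod_type,
    ← Fintype.sum_ite_eq' i fun a => ∑ b : Fin l, if (b : ℕ) < q then g a b else 0,
    ← Finset.sum_add_distrib]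
  refine Finset.sum_congr rfl fun a _ => ?_
  have hlex : ∀ b : Fin l, (b : ℕ) + l * a < i * l + q ↔ a < i ∨ a = i ∧ (b : ℕ) < q := by
    simpa only [Fin.lt_def, Fin.ext_iff] using fun b : Fin l => lex_lt_iff b.isLt hq
  simp only [Equiv.symm_apply_apply, finProdFinEquiv_apply_val, hlex, ← Fin.lt_def]
  rcases lt_trichotomy a i with h | rfl | h
  · simp [h, h.ne]
  · simp
  · simp [h.not_gt, h.ne']

lemma exists_eq_mk_mul_add {N l : ℕ} (x : Fin (N * l)) :
    ∃ (y : Fin N) (q : Fin l), x = ⟨y * l + q, mul_add_lt_mul y.isLt q.isLt⟩ := by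
  obtain ⟨⟨y, q⟩, rfl⟩ := finProdFinEquiv.surjective x
  exact ⟨y, q, Fin.ext (by simp only [finProdFinEquiv_apply_val]; ring)⟩

lemma finSigmaEquiv_apply_val : ∀ {n : ℕ} (k : Fin n → ℕ) (p : Σ i : Fin n, Fin (k i)),
    (finSigmaEquiv k p : ℕ) = blockOffset k p.1 + p.2
  | 0, _, p => p.1.elim0
  | n + 1, k, ⟨i, b⟩ => by
      induction i using Fin.cases with
      | zero => simp [finSigmaEquiv, sigmaFinSucc, blockOffset_zero]
      | succ i =>
          have ih := finSigmaEquiv_apply_val (fun t : Fin n => k t.succ) ⟨i, b⟩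
          simp only [finSigmaEquiv, sigmaFinSucc, Equiv.trans_apply, Equiv.coe_fn_mk,
            Fin.cases_succ, Equiv.sumCongr_apply, Sum.map_inr, finSumFinEquiv_apply_right,
            finCongr_apply, Fin.val_cast, Fin.val_natAdd, Fin.val_succ, blockOffset_succ] at ih ⊢
          lia

lemma permCast_apply_val {a b : ℕ} (h : a = b) (σ : Equiv.Perm (Fin a)) (x : Fin b) :
    (permCast h σ x : ℕ) = σ (Fin.cast h.symm x) := rfl

lemma permOperadComp_apply_val {n : ℕ} (k : Fin n → ℕ) (σ : Equiv.Perm (Fin n))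
    (τ : ∀ i, Equiv.Perm (Fin (k i))) (i : Fin n) (b : Fin (k i)) (x : Fin (∑ i, k i))
    (hx : (x : ℕ) = blockOffset k i + b) :
    (permOperadComp k σ τ x : ℕ) = blockOffset (fun j => k (σ.symm j)) (σ i) + τ i b := by
  have hsymm : (finSigmaEquiv k).symm x = ⟨i, b⟩ := by
    rw [Equiv.symm_apply_eq]
    exact Fin.ext (by rw [hx, finSigmaEquiv_apply_val])
  simp only [permOperadComp, Equiv.trans_apply, hsymm, Equiv.sigmaCongr,
    Equiv.sigmaCongrRight_apply, Equiv.sigmaCongrLeft_apply, finCongr_apply, Fin.val_cast, finSigmaEquiv_apply_val]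

lemma permOperadComp_one_left_apply_val {n : ℕ} (k : Fin n → ℕ)
    (τ : ∀ i, Equiv.Perm (Fin (k i))) (i : Fin n) (b : Fin (k i)) (x : Fin (∑ i, k i))
    (hx : (x : ℕ) = blockOffset k i + b) :
    (permOperadComp k 1 τ x : ℕ) = blockOffset k i + τ i b :=
  permOperadComp_apply_val k 1 τ i b x hx

lemma permOperadComp_one_right_apply_val {n : ℕ} (k : Fin n → ℕ) (σ : Equiv.Perm (Fin n))
    (i : Fin n) (b : ℕ) (hb : b < k i) (x : Fin (∑ i, k i))
    (hx : (x : ℕ) = blockOffset k i + b) :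
    (permOperadComp k σ (fun _ => 1) x : ℕ) = blockOffset (fun j => k (σ.symm j)) (σ i) + b :=
  permOperadComp_apply_val k σ _ i ⟨b, hb⟩ x hx

lemma IsTransposePerm.apply_finProdFinEquiv {m l : ℕ} {t : Equiv.Perm (Fin (m * l))}
    (ht : IsTransposePerm m l t) (a : Fin m) (b : Fin l) :
    t (finProdFinEquiv (a, b)) = finCongr (Nat.mul_comm l m) (finProdFinEquiv (b, a)) := by
  have hab : finProdFinEquiv (a, b) = ⟨a * l + b, mul_add_lt_mul a.isLt b.isLt⟩ :=
    Fin.ext (by simp only [finProdFinEquiv_apply_val]; ring)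
  rw [hab, ht a b]
  exact Fin.ext (by simp only [finCongr_apply, Fin.val_cast, finProdFinEquiv_apply_val]; ring)

lemma blockOffset_comp_transpose_symm {m l : ℕ} {t : Equiv.Perm (Fin (m * l))}
    (ht : IsTransposePerm m l t) (g : Fin m → Fin l → ℕ) (q : Fin l) (c : ℕ) (hc : c ≤ m) :
    blockOffset (fun j => g (finProdFinEquiv.symm (t.symm j)).1
        (finProdFinEquiv.symm (t.symm j)).2) (q * m + c)
      = blockOffset (fun b => ∑ a, g a b) q + blockOffset (fun a => g a q) c := by
  have hswap : ∀ s : Fin (l * m), finProdFinEquiv.symm (t.symm (finCongr (Nat.mul_comm l m) s))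
      = (finProdFinEquiv.symm s).swap := by
    intro s
    obtain ⟨⟨b, a⟩, rfl⟩ := finProdFinEquiv.surjective s
    rw [Equiv.symm_apply_apply, Prod.swap_prod_mk, Equiv.symm_apply_eq, Equiv.symm_apply_eq,
      ht.apply_finProdFinEquiv]
  rw [← blockOffset_comp_finCongr (Nat.mul_comm l m)]
  simp only [hswap, Prod.fst_swap, Prod.snd_swap]
  exact blockOffset_finProd (fun b a => g a b) q c hc

lemma blockOffset_replicate {m l : ℕ} (hl : 0 < l) (nn : Fin m → ℕ) (i : Fin m) (q : ℕ)
    (hq : q ≤ l) :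
    blockOffset (fun s : Fin (m * l) => nn ⟨s / l, (Nat.div_lt_iff_lt_mul hl).mpr s.isLt⟩)
        (i * l + q)
      = blockOffset nn i * l + q * nn i := by
  have := blockOffset_finProd (fun a (_ : Fin l) => nn a) i q hq
  simp only [Finset.sum_const, Finset.card_univ, Fintype.card_fin, smul_eq_mul,
    blockOffset_const _ q hq] at this
  rw [← blockOffset_mul]
  simp only [Nat.mul_comm (nn _) l]
  exact this

lemma blockOffset_replicate_comp_transpose_symm {m l : ℕ} (hl : 0 < l) (nn : Fin m → ℕ)
    {t : Equiv.Perm (Fin (m * l))} (ht : IsTransposePerm m l t) (i : Fin m) (q : Fin l) :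
    blockOffset (fun j => nn ⟨(t.symm j : ℕ) / l, (Nat.div_lt_iff_lt_mul hl).mpr (t.symm j).isLt⟩)
        (q * m + i)
      = q * ∑ a, nn a + blockOffset nn i := by
  have := blockOffset_comp_transpose_symm ht (fun a (_ : Fin l) => nn a) q i i.isLt.le
  rw [blockOffset_const _ _ q.isLt.le] at this
  exact this

theorem transpose_comp_identity_right_general (l m : ℕ) (hl : 0 < l)
    (nn : Fin m → ℕ)
    (tml : Equiv.Perm (Fin (m * l))) (tnl : ∀ i, Equiv.Perm (Fin (nn i * l)))
    (tNl : Equiv.Perm (Fin ((∑ i, nn i) * l)))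
    (h1 : IsTransposePerm m l tml)
    (h2 : ∀ i, IsTransposePerm (nn i) l (tnl i))
    (h3 : IsTransposePerm (∑ i, nn i) l tNl) :
    permCast (sum_div_eq m l hl nn)
        (permOperadComp
          (fun s : Fin (m * l) => nn ⟨s.val / l, (Nat.div_lt_iff_lt_mul hl).mpr s.isLt⟩)
          tml fun _ => 1) *
      permCast (show (∑ i, nn i * l) = (∑ i, nn i) * l from (Finset.sum_mul ..).symm)
        (permOperadComp (fun i => nn i * l) (1 : Equiv.Perm (Fin m)) tnl)
      = tNl := by
  refine Equiv.ext fun x => Fin.ext ?_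
  obtain ⟨y, q, rfl⟩ := exists_eq_mk_mul_add x
  obtain ⟨⟨i, p⟩, rfl⟩ := (finSigmaEquiv nn).surjective y
  have hy : (finSigmaEquiv nn ⟨i, p⟩ : ℕ) = blockOffset nn i + p :=
    finSigmaEquiv_apply_val nn ⟨i, p⟩
  have hblock : nn ⟨(i * l + q : ℕ) / l, (Nat.div_lt_iff_lt_mul hl).mpr
      (mul_add_lt_mul i.isLt q.isLt)⟩ = nn i := by
    refine congrArg nn (Fin.ext ?_)
    change (i * l + q : ℕ) / l = i
    rw [Nat.mul_comm, Nat.mul_add_div hl, Nat.div_eq_of_lt q.isLt, add_zero]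
  rw [Equiv.Perm.mul_apply, permCast_apply_val, permOperadComp_one_right_apply_val _ _
    ⟨i * l + q, mul_add_lt_mul i.isLt q.isLt⟩ p (hblock.symm ▸ p.isLt) _ ?_, h1 i q,
    blockOffset_replicate_comp_transpose_symm hl nn h1 i q, h3]
  · simp only [hy]; ring
  · rw [Fin.val_cast, permCast_apply_val, permOperadComp_one_left_apply_val _ _ i
      ⟨p * l + q, mul_add_lt_mul p.isLt q.isLt⟩ _ ?_, h2 i p q, blockOffset_mul,
      blockOffset_replicate hl nn i q q.isLt.le]
    · ring
    · simp only [Fin.val_cast, hy, blockOffset_mul]; ring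

/-- For positive `l, m, n₁, …, n_m` with `N = n₁ + ⋯ + n_m`, in
`Σ_{Nl}` one has `μ(τ_{m,l}; e_{n₁},…,e_{n₁},…,e_{n_m},…,e_{n_m}) ·
μ(e_m; τ_{n₁,l},…,τ_{n_m,l}) = τ_{N,l}`, where each `e_{nᵢ}` is repeated `l`
consecutive times. -/
theorem transpose_comp_identity_right (l m : ℕ) (hl : 0 < l) (hm : 0 < m)
    (nn : Fin m → ℕ) (hn : ∀ i, 0 < nn i)
    (tml : Equiv.Perm (Fin (m * l))) (tnl : ∀ i, Equiv.Perm (Fin (nn i * l)))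
    (tNl : Equiv.Perm (Fin ((∑ i, nn i) * l)))
    (h1 : IsTransposePerm m l tml)
    (h2 : ∀ i, IsTransposePerm (nn i) l (tnl i))
    (h3 : IsTransposePerm (∑ i, nn i) l tNl) :
    permCast (sum_div_eq m l hl nn)
        (permOperadComp
          (fun s : Fin (m * l) => nn ⟨s.val / l, (Nat.div_lt_iff_lt_mul hl).mpr s.isLt⟩)
          tml fun _ => 1) *
      permCast (show (∑ i, nn i * l) = (∑ i, nn i) * l from (Finset.sum_mul ..).symm)
        (permOperadComp (fun i => nn i * l) (1 : Equiv.Perm (Fin m)) tnl)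
      = tNl :=
  transpose_comp_identity_right_general l m hl nn tml tnl tNl h1 h2 h3
end
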